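/- (Guarantee of Oblique Thresholding.) Let Ψ, Ψ̃ ∈ K^{m×n}, let x* ∈ K^n be s-sparse with support J*, let z ∈ K^m and y = Ψx* + z. Suppose that min_{j∈J*} |(x*)_j| > 2·θ_{s+1}(Ψ̃*Ψ)·‖x*‖₂ + 2·(max_{1≤l≤n} ‖ψ̃_l‖₂)·‖z‖₂. Then for every j ∈ J* and every l ∈ {1,…,n}\J* one has |(Ψ̃*y)_j| > |(Ψ̃*y)_l|; i.e., oblique thresholding (taking the indices of the |J*| largest-magnitude entries of Ψ̃*y) identifies J* exactly. -/

import Mathlib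

open scoped BigOperators
open Matrix MeasureTheory

noncomputable section

namespace ObliquePursuit

variable {𝕜 : Type*} [RCLike 𝕜]

/-- The Euclidean (`ℓ²`) norm of a finitely indexed vector. -/
def l2 {ι : Type*} [Fintype ι] (x : ι → 𝕜) : ℝ :=
  Real.sqrt (∑ i, ‖x i‖ ^ 2)

/-- The spectral (`ℓ² → ℓ²` operator) norm of a matrix. -/
def specNorm {ι κ : Type*} [Fintype ι] [Fintype κ] [DecidableEq κ]
    (M : Matrix ι κ 𝕜) : ℝ :=
  ‖LinearMap.toContinuousLinearMap (Matrix.toEuclideanLin M)‖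

/-- `x` is `s`-sparse: it has at most `s` nonzero entries. -/
def Sparse {ι : Type*} (s : ℕ) (x : ι → 𝕜) : Prop :=
  ∃ J : Finset ι, J.card ≤ s ∧ ∀ i, x i ≠ 0 → i ∈ J

/-- The `s`-restricted biorthogonality constant `θ_s(M)`: the smallest `δ ≥ 0` such that
`|⟨y, Mx⟩ − ⟨y, x⟩| ≤ δ‖x‖₂‖y‖₂` for all `x, y` supported on a common index set of
cardinality at most `s`. -/
def theta {ι : Type*} [Fintype ι] (s : ℕ) (M : Matrix ι ι 𝕜) : ℝ :=
  sInf {δ : ℝ | 0 ≤ δ ∧ ∀ J : Finset ι, J.card ≤ s →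
    ∀ x y : ι → 𝕜, (∀ i, x i ≠ 0 → i ∈ J) → (∀ i, y i ≠ 0 → i ∈ J) →
      ‖star y ⬝ᵥ M.mulVec x - star y ⬝ᵥ x‖ ≤ δ * l2 x * l2 y}

/-- The `s`-restricted isometry constant `δ_s(Ψ)`. -/
def ric {ι κ : Type*} [Fintype ι] [Fintype κ] (s : ℕ) (Ψ : Matrix ι κ 𝕜) : ℝ :=
  sInf {δ : ℝ | 0 ≤ δ ∧ ∀ x : κ → 𝕜, Sparse s x →
    (1 - δ) * l2 x ^ 2 ≤ l2 (Ψ.mulVec x) ^ 2 ∧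
      l2 (Ψ.mulVec x) ^ 2 ≤ (1 + δ) * l2 x ^ 2}

/-- Coordinate projection `Π_J`: keep the entries indexed by `J`, zero out the others. -/
def proj {ι : Type*} [DecidableEq ι] (J : Finset ι) (x : ι → 𝕜) : ι → 𝕜 :=
  fun i => if i ∈ J then x i else 0

/-- The column submatrix `Ψ_J` of `Ψ` formed by the columns indexed by `J`. -/
def cols {ι κ : Type*} (Ψ : Matrix ι κ 𝕜) (J : Finset κ) :
    Matrix ι {j // j ∈ J} 𝕜 :=
  Ψ.submatrix id fun j => (j : κ)

/-- The `j`-th column of `Ψ`. -/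
def col {ι κ : Type*} (Ψ : Matrix ι κ 𝕜) (j : κ) : ι → 𝕜 :=
  fun i => Ψ i j

/-- The complementary oblique projector `E = I − Ψ_J (Ψ̃_J^* Ψ_J)⁻¹ Ψ̃_J^*`
(equal to `I` when `J = ∅`). -/
def obliqueE {ι κ : Type*} [Fintype ι] [DecidableEq ι] [DecidableEq κ]
    (Ψ Ψt : Matrix ι κ 𝕜) (J : Finset κ) : Matrix ι ι 𝕜 :=
  1 - cols Ψ J * ((cols Ψt J)ᴴ * cols Ψ J)⁻¹ * (cols Ψt J)ᴴ

/-- The smallest (real) eigenvalue of a matrix. -/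
def lamMin {ι : Type*} [Fintype ι] (G : Matrix ι ι 𝕜) : ℝ :=
  sInf {r : ℝ | ∃ v : ι → 𝕜, v ≠ 0 ∧ G.mulVec v = (r : 𝕜) • v}

/-- The `j`-th largest singular value (1-indexed) of a matrix, characterized via the
Eckart–Young–Mirsky theorem: `σ_j(A) = min { ‖A − B‖ : rank B < j }` where `‖·‖` is the
spectral norm. -/
def singVal {ι κ : Type*} [Fintype ι] [Fintype κ] [DecidableEq κ]
    (A : Matrix ι κ 𝕜) (j : ℕ) : ℝ :=
  sInf {r : ℝ | ∃ B : Matrix ι κ 𝕜, B.rank < j ∧ r = specNorm (A - B)}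

/-! The argument is entrywise. Writing `M = Ψ̃*Ψ`, one has `(Ψ̃*y)_k = (M x*)_k + ⟨ψ̃_k, z⟩`.
Testing the biorthogonality bound with `e_k` and `x*`, both supported in `J* ∪ {k}` (at most
`s + 1` indices), gives `|(M x*)_k − x*_k| ≤ θ_{s+1}(M)‖x*‖₂`, and Cauchy–Schwarz bounds the
noise term by `‖ψ̃_k‖₂‖z‖₂`. So every entry of `Ψ̃*y` lies within
`ε = θ_{s+1}(M)‖x*‖₂ + max_l ‖ψ̃_l‖₂ ‖z‖₂` of the corresponding entry of `x*`; off `J*` these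
vanish, while on `J*` they exceed `2ε` in modulus. -/

section L2

variable {ι κ : Type*} [Fintype ι] [Fintype κ]

lemma l2_eq_norm_toLp (x : ι → 𝕜) : l2 x = ‖WithLp.toLp 2 x‖ := by
  rw [EuclideanSpace.norm_eq]; rfl

lemma l2_nonneg (x : ι → 𝕜) : 0 ≤ l2 x :=
  Real.sqrt_nonneg _

lemma l2_single_one [DecidableEq ι] (k : ι) : l2 (Pi.single k (1 : 𝕜)) = 1 := by
  rw [l2_eq_norm_toLp, ← PiLp.single, PiLp.norm_single, norm_one]

lemma norm_star_dotProduct_le (y x : ι → 𝕜) : ‖star y ⬝ᵥ x‖ ≤ l2 y * l2 x := by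
  have h := norm_inner_le_norm (𝕜 := 𝕜) (WithLp.toLp 2 y) (WithLp.toLp 2 x)
  rwa [EuclideanSpace.inner_toLp_toLp, dotProduct_comm, ← l2_eq_norm_toLp,
    ← l2_eq_norm_toLp] at h

lemma specNorm_nonneg [DecidableEq κ] (M : Matrix ι κ 𝕜) : 0 ≤ specNorm M :=
  norm_nonneg _

lemma l2_mulVec_le [DecidableEq κ] (M : Matrix ι κ 𝕜) (x : κ → 𝕜) :
    l2 (M *ᵥ x) ≤ specNorm M * l2 x := by
  rw [l2_eq_norm_toLp, l2_eq_norm_toLp]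
  exact (LinearMap.toContinuousLinearMap (Matrix.toEuclideanLin M)).le_opNorm _

end L2

section Theta

variable {ι : Type*} [Fintype ι]

def IsThetaBound (s : ℕ) (M : Matrix ι ι 𝕜) (δ : ℝ) : Prop :=
  ∀ J : Finset ι, J.card ≤ s →
    ∀ x y : ι → 𝕜, (∀ i, x i ≠ 0 → i ∈ J) → (∀ i, y i ≠ 0 → i ∈ J) →
      ‖star y ⬝ᵥ M.mulVec x - star y ⬝ᵥ x‖ ≤ δ * l2 x * l2 y

lemma theta_eq_sInf (s : ℕ) (M : Matrix ι ι 𝕜) :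
    theta s M = sInf {δ | 0 ≤ δ ∧ IsThetaBound s M δ} :=
  rfl

lemma isThetaBound_specNorm_sub_one [DecidableEq ι] (s : ℕ) (M : Matrix ι ι 𝕜) :
    IsThetaBound s M (specNorm (M - 1)) := by
  intro J _ x y _ _
  calc ‖star y ⬝ᵥ M *ᵥ x - star y ⬝ᵥ x‖ = ‖star y ⬝ᵥ (M - 1) *ᵥ x‖ := by
        rw [sub_mulVec, one_mulVec, dotProduct_sub]
    _ ≤ l2 y * (specNorm (M - 1) * l2 x) :=
        (norm_star_dotProduct_le _ _).trans
          (mul_le_mul_of_nonneg_left (l2_mulVec_le _ _) (l2_nonneg y))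
    _ = specNorm (M - 1) * l2 x * l2 y := by ring

lemma norm_sub_le_theta {s : ℕ} (M : Matrix ι ι 𝕜) {J : Finset ι} (hJ : J.card ≤ s)
    {x y : ι → 𝕜} (hx : ∀ i, x i ≠ 0 → i ∈ J) (hy : ∀ i, y i ≠ 0 → i ∈ J) :
    ‖star y ⬝ᵥ M *ᵥ x - star y ⬝ᵥ x‖ ≤ theta s M * l2 x * l2 y := by
  classical
  have hne : {δ | 0 ≤ δ ∧ IsThetaBound s M δ}.Nonempty :=
    ⟨_, specNorm_nonneg _, isThetaBound_specNorm_sub_one s M⟩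
  rw [mul_assoc, theta_eq_sInf]
  obtain hzero | hpos := (mul_nonneg (l2_nonneg x) (l2_nonneg y)).eq_or_lt
  · -- every admissible `δ` already forces the left side to vanish
    obtain ⟨δ, -, hδ⟩ := hne
    simpa [mul_assoc, ← hzero] using hδ J hJ x y hx hy
  · rw [← div_le_iff₀ hpos]
    refine le_csInf hne fun δ ⟨_, hδ⟩ => ?_
    rw [div_le_iff₀ hpos, ← mul_assoc]
    exact hδ J hJ x y hx hy

lemma norm_mulVec_apply_sub_le_theta [DecidableEq ι] {s : ℕ} (M : Matrix ι ι 𝕜)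
    {J : Finset ι} (hJ : J.card < s) {x : ι → 𝕜} (hx : ∀ i, x i ≠ 0 → i ∈ J) (k : ι) :
    ‖(M *ᵥ x) k - x k‖ ≤ theta s M * l2 x := by
  have hk : ∀ i, (Pi.single k (1 : 𝕜) : ι → 𝕜) i ≠ 0 → i ∈ insert k J := fun i hi => by
    rw [Finset.mem_insert]
    exact .inl (by_contra fun h => hi (Pi.single_eq_of_ne h 1))
  have h := norm_sub_le_theta M ((J.card_insert_le k).trans hJ)
    (fun i hi => Finset.mem_insert_of_mem (hx i hi)) hk
  rwa [← Pi.single_star, star_one, single_one_dotProduct, single_one_dotProduct,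
    l2_single_one, mul_one] at h

end Theta

lemma norm_lt_norm_of_norm_sub_le {E : Type*} [SeminormedAddCommGroup E] {u v b : E} {ε : ℝ}
    (hu : ‖u‖ ≤ ε) (hv : ‖v - b‖ ≤ ε) (hb : 2 * ε < ‖b‖) : ‖u‖ < ‖v‖ := by
  have := norm_sub_norm_le b v
  rw [norm_sub_rev] at this
  linarith

lemma l2_col_le_iSup {ι κ : Type*} [Fintype ι] [Finite κ] (Ψ : Matrix ι κ 𝕜) (k : κ) :
    l2 (col Ψ k) ≤ ⨆ l, l2 (col Ψ l) :=
  le_ciSup (f := fun l => l2 (col Ψ l)) (Finite.bddAbove_range _) k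

lemma conjTranspose_mulVec_apply {ι κ : Type*} [Fintype ι] (Ψ : Matrix ι κ 𝕜)
    (z : ι → 𝕜) (k : κ) : (Ψᴴ *ᵥ z) k = star (col Ψ k) ⬝ᵥ z := by
  simp only [mulVec, dotProduct, conjTranspose_apply, col, Pi.star_apply]

lemma norm_conjTranspose_mulVec_apply_sub_le {m n s : ℕ} (Ψ Ψt : Matrix (Fin m) (Fin n) 𝕜)
    {xstar : Fin n → 𝕜} {J : Finset (Fin n)} (hx : ∀ i, xstar i ≠ 0 → i ∈ J)
    (hcard : J.card ≤ s) (z : Fin m → 𝕜) (k : Fin n) :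
    ‖(Ψtᴴ *ᵥ (Ψ *ᵥ xstar + z)) k - xstar k‖
      ≤ theta (s + 1) (Ψtᴴ * Ψ) * l2 xstar + (⨆ l, l2 (col Ψt l)) * l2 z := by
  have hsplit : (Ψtᴴ *ᵥ (Ψ *ᵥ xstar + z)) k - xstar k
      = ((Ψtᴴ * Ψ) *ᵥ xstar) k - xstar k + star (col Ψt k) ⬝ᵥ z := by
    rw [mulVec_add, mulVec_mulVec, Pi.add_apply, conjTranspose_mulVec_apply]
    ring
  rw [hsplit]
  refine (norm_add_le _ _).trans (add_le_add ?_ ?_)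
  · exact norm_mulVec_apply_sub_le_theta _ (Nat.lt_succ_of_le hcard) hx k
  · exact (norm_star_dotProduct_le _ _).trans
      (mul_le_mul_of_nonneg_right (l2_col_le_iSup Ψt k) (l2_nonneg z))

/-- guarantee of Oblique Thresholding. -/
theorem statement1 (m n s : ℕ) (Ψ Ψt : Matrix (Fin m) (Fin n) 𝕜)
    (xstar : Fin n → 𝕜) (Jstar : Finset (Fin n))
    (hsupp : ∀ i, xstar i ≠ 0 ↔ i ∈ Jstar) (hcard : Jstar.card ≤ s)
    (z y : Fin m → 𝕜) (hy : y = Ψ.mulVec xstar + z)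
    (hmin : ∀ j ∈ Jstar,
      2 * theta (s + 1) (Ψtᴴ * Ψ) * l2 xstar
          + 2 * (⨆ l, l2 (col Ψt l)) * l2 z < ‖xstar j‖) :
    ∀ j ∈ Jstar, ∀ l, l ∉ Jstar → ‖Ψtᴴ.mulVec y l‖ < ‖Ψtᴴ.mulVec y j‖ := by
  intro j hj l hl
  have herr := norm_conjTranspose_mulVec_apply_sub_le Ψ Ψt (fun i => (hsupp i).mp) hcard z
  rw [← hy] at herr
  have hxl : xstar l = 0 := not_not.mp (mt (hsupp l).mp hl)
  refine norm_lt_norm_of_norm_sub_le (b := xstar j) ?_ (herr j) (by linarith [hmin j hj])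
  simpa [hxl] using herr l

end ObliquePursuit
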